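/- arXiv:2303.09546 — 3 statements merged into one kernel-verified Lean document; each statement's English description precedes it below -/
import Mathlib

section
/- For any real numbers a, b with 0 < a < 1 and 0 < b < 1, the Bernoulli shift on ({0,1}^ℤ, μ_a^⊗ℤ), where μ_a is the measure on {0,1} with μ_a({1}) = a and μ_a({0}) = 1 − a, is quasi-similar to the Bernoulli shift on ({0,1}^ℤ, μ_b^⊗ℤ). (In particular, Bernoulli shifts of different Kolmogorov entropy can be quasi-similar, so entropy is not a quasi-similarity invariant.) -/
/-!
Write `e_a(u) = (u - a) / √(a(1 - a))` for the standardized coordinate of `μ_a` on `{0, 1}`.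
The Walsh functions `w^a_S(x) = ∏_{i ∈ S} e_a(x_i)`, `S ⊆ ℤ` finite, form a Hilbert basis of
`L²(μ_a^⊗ℤ)`: they are orthonormal because the coordinates are independent, and every indicator
of a cylinder is a finite combination of them. Let `W` be the diagonal operator
`w^a_S ↦ ρ^|S| w^b_S` with `ρ = √(a(1 - a)) √(b(1 - b)) ∈ (0, 1]`. Its coefficients do not vanish,
so `W` is injective with dense range; it fixes `w_∅ = 1` in both directions; and it commutes with
the shifts, which permute the Walsh functions preserving `|S|`. For positivity, on functions of
the coordinates in a finite window `I`, `W` is the integral operator with kernel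
`∑_{S ⊆ I} ρ^|S| w^a_S(x) w^b_S(y) = ∏_{i ∈ I} (1 + (x_i - a)(y_i - b)) ≥ 0`,
and these truncations converge to `W f`.
-/

open MeasureTheory

noncomputable section

/-- `π` is the product measure over the index set `ι` of copies of `μ`:
every cylinder set has the product measure. -/
def IsProductMeasure {ι α : Type*} [MeasurableSpace α] (π : Measure (ι → α))
    (μ : Measure α) : Prop :=
  ∀ (s : Finset ι) (C : ι → Set α), (∀ i, MeasurableSet (C i)) →
    π {x | ∀ i ∈ s, x i ∈ C i} = ∏ i ∈ s, μ (C i)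

/-- The constant function `1` as an element of `L²(μ)`. -/
def one2 {X : Type*} [MeasurableSpace X] (μ : Measure X) [IsProbabilityMeasure μ] :
    Lp ℝ 2 μ :=
  indicatorConstLp 2 MeasurableSet.univ (measure_ne_top μ _) (1 : ℝ)

/-- The Koopman operator `U_T f = f ∘ T⁻¹` of an invertible measure-preserving
transformation `T`, expressed via its (measure-preserving) inverse `Ti = T⁻¹`. -/
def koopman {X : Type*} [MeasurableSpace X] {μ : Measure X} {Ti : X → X}
    (hTi : MeasurePreserving Ti μ μ) : Lp ℝ 2 μ →L[ℝ] Lp ℝ 2 μ :=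
  (Lp.compMeasurePreservingₗᵢ ℝ Ti hTi).toContinuousLinearMap

/-- `W` is a Markov quasi-similarity intertwining the Koopman operators `UT`, `US`:
it is a positive bounded operator with `W1 = 1`, `W*1 = 1`, injective, with dense
range, and `W ∘ UT = US ∘ W`. -/
structure IsMarkovQuasiSimilarity {X Y : Type*} [MeasurableSpace X] [MeasurableSpace Y]
    {μ : Measure X} {ν : Measure Y} [IsProbabilityMeasure μ] [IsProbabilityMeasure ν]
    (UT : Lp ℝ 2 μ →L[ℝ] Lp ℝ 2 μ) (US : Lp ℝ 2 ν →L[ℝ] Lp ℝ 2 ν)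
    (W : Lp ℝ 2 μ →L[ℝ] Lp ℝ 2 ν) : Prop where
  positive : ∀ f : Lp ℝ 2 μ, 0 ≤ f → 0 ≤ W f
  map_one : W (one2 μ) = one2 ν
  adjoint_one : ContinuousLinearMap.adjoint W (one2 ν) = one2 μ
  injective : Function.Injective W
  denseRange : DenseRange W
  intertwines : W.comp UT = US.comp W

/-- The two-sided Bernoulli shift `(Sx)(n) = x(n+1)`. -/
def shiftZ {α : Type*} : (ℤ → α) → ℤ → α := fun x n => x (n + 1)

/-- The inverse of the Bernoulli shift. -/
def shiftZinv {α : Type*} : (ℤ → α) → ℤ → α := fun x n => x (n - 1)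

/-- The Bernoulli measure `μ_a` on `{0,1}` (identified with `Bool`, `1 ↦ true`),
with `μ_a {1} = a` and `μ_a {0} = 1 - a`. -/
def bernMeasure (a : ℝ) : Measure Bool :=
  ENNReal.ofReal a • Measure.dirac true + ENNReal.ofReal (1 - a) • Measure.dirac false

open scoped ENNReal InnerProductSpace

section Diagonal

variable {𝕜 ι : Type*}

namespace lp

variable [NormedField 𝕜] {E : ι → Type*} [∀ i, NormedAddCommGroup (E i)]
  [∀ i, NormedSpace 𝕜 (E i)] {p : ℝ≥0∞} [Fact (1 ≤ p)]

def diagonal (d : ι → 𝕜) (hd : ∀ i, ‖d i‖ ≤ 1) : lp E p →L[𝕜] lp E p :=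
  have hle (f : lp E p) (i : ι) : ‖d i • f i‖ ≤ ‖f i‖ :=
    (norm_smul_le _ _).trans (mul_le_of_le_one_left (norm_nonneg _) (hd i))
  LinearMap.mkContinuous
    { toFun f := ⟨fun i => d i • f i, (lp.memℓp f).mono' (hle f)⟩
      map_add' f g := by ext i; simp [smul_add]; rfl
      map_smul' c f := by ext i; simp [smul_comm (d i) c] } 1
    fun f => by
      rw [one_mul]
      exact lp.norm_mono (one_pos.trans_le (Fact.out : 1 ≤ p)).ne' (hle f)

@[simp]
theorem diagonal_apply (d : ι → 𝕜) (hd : ∀ i, ‖d i‖ ≤ 1) (f : lp E p) (i : ι) :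
    diagonal d hd f i = d i • f i :=
  rfl

end lp

namespace HilbertBasis

variable [RCLike 𝕜] {E F : Type*} [NormedAddCommGroup E] [InnerProductSpace 𝕜 E]
  [NormedAddCommGroup F] [InnerProductSpace 𝕜 F]
  (b₁ : HilbertBasis ι 𝕜 E) (b₂ : HilbertBasis ι 𝕜 F) (d : ι → 𝕜) (hd : ∀ i, ‖d i‖ ≤ 1)

def diagonalMap : E →L[𝕜] F :=
  b₂.repr.symm.toContinuousLinearEquiv.toContinuousLinearMap ∘L lp.diagonal d hd ∘L
    b₁.repr.toContinuousLinearEquiv.toContinuousLinearMap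

theorem repr_diagonalMap (x : E) (i : ι) :
    b₂.repr (b₁.diagonalMap b₂ d hd x) i = d i * b₁.repr x i := by
  simp [diagonalMap]

theorem diagonalMap_apply_basis (i : ι) : b₁.diagonalMap b₂ d hd (b₁ i) = d i • b₂ i := by
  classical
  refine b₂.repr.injective (lp.ext (funext fun j => ?_))
  rw [repr_diagonalMap, map_smul, lp.coeFn_smul, Pi.smul_apply, b₁.repr_self, b₂.repr_self]
  by_cases h : j = i
  · subst h; simp
  · simp [h]

theorem hasSum_diagonalMap (x : E) :
    HasSum (fun i => (d i * b₁.repr x i) • b₂ i) (b₁.diagonalMap b₂ d hd x) := by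
  simpa only [repr_diagonalMap] using b₂.hasSum_repr (b₁.diagonalMap b₂ d hd x)

theorem diagonalMap_injective (hd₀ : ∀ i, d i ≠ 0) :
    Function.Injective (b₁.diagonalMap b₂ d hd) := by
  intro x y hxy
  refine b₁.repr.injective (lp.ext (funext fun i => mul_left_cancel₀ (hd₀ i) ?_))
  rw [← repr_diagonalMap b₁ b₂ d hd, ← repr_diagonalMap b₁ b₂ d hd, hxy]

theorem denseRange_diagonalMap (hd₀ : ∀ i, d i ≠ 0) : DenseRange (b₁.diagonalMap b₂ d hd) := by
  have hb₂ : Set.range b₂ ⊆ LinearMap.range (b₁.diagonalMap b₂ d hd).toLinearMap := by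
    rintro _ ⟨i, rfl⟩
    refine ⟨(d i)⁻¹ • b₁ i, ?_⟩
    rw [ContinuousLinearMap.coe_coe, map_smul, diagonalMap_apply_basis, smul_smul,
      inv_mul_cancel₀ (hd₀ i), one_smul]
  have := Submodule.topologicalClosure_mono (Submodule.span_le.2 hb₂)
  rw [b₂.dense_span, top_le_iff] at this
  exact Submodule.dense_iff_topologicalClosure_eq_top.2 this

theorem adjoint_diagonalMap_basis [CompleteSpace E] [CompleteSpace F] (i : ι) :
    (b₁.diagonalMap b₂ d hd).adjoint (b₂ i) = starRingEnd 𝕜 (d i) • b₁ i := by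
  refine ext_inner_right 𝕜 fun x => ?_
  rw [ContinuousLinearMap.adjoint_inner_left, inner_smul_left, RCLike.conj_conj,
    ← b₂.repr_apply_apply, repr_diagonalMap, b₁.repr_apply_apply]

theorem diagonalMap_comp_eq_comp_diagonalMap (σ : ι → ι) {U₁ : E →L[𝕜] E} {U₂ : F →L[𝕜] F}
    (hU₁ : ∀ i, U₁ (b₁ i) = b₁ (σ i)) (hU₂ : ∀ i, U₂ (b₂ i) = b₂ (σ i))
    (hdσ : ∀ i, d (σ i) = d i) :
    b₁.diagonalMap b₂ d hd ∘L U₁ = U₂ ∘L b₁.diagonalMap b₂ d hd := by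
  refine ContinuousLinearMap.ext_on
    (Submodule.dense_iff_topologicalClosure_eq_top.2 b₁.dense_span) ?_
  rintro _ ⟨i, rfl⟩
  simp only [ContinuousLinearMap.comp_apply, hU₁, diagonalMap_apply_basis, map_smul, hU₂, hdσ]

end HilbertBasis

end Diagonal

section ProductMeasure

theorem IsProductMeasure.integral_finset_prod {ι α : Type*} [MeasurableSpace α]
    {π : Measure (ι → α)} {μ : Measure α} [IsProbabilityMeasure μ]
    (hπ : IsProductMeasure π μ) (S : Finset ι) {g : ι → α → ℝ} (hg : ∀ i, Measurable (g i)) :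
    ∫ x, ∏ i ∈ S, g i (x i) ∂π = ∏ i ∈ S, ∫ u, g i u ∂μ := by
  have hmeas : Measurable fun y : S → α => ∏ i : S, g i (y i) :=
    Finset.measurable_prod _ fun i _ => (hg i).comp (measurable_pi_apply i)
  rw [Measure.eq_infinitePi (fun _ => μ) hπ, ← Finset.prod_coe_sort S,
    ← integral_fintype_prod_eq_prod,
    ← integral_restrict_infinitePi (fun _ => μ) hmeas.aestronglyMeasurable]
  simp_rw [Finset.restrict, Finset.prod_coe_sort S fun i => g i _]

theorem MeasureTheory.Integrable.ae_eq_zero_of_forall_setIntegral_pi_eq_zero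
    {ι : Type*} {α : ι → Type*}
    [∀ i, MeasurableSpace (α i)] {E : Type*} [NormedAddCommGroup E] [NormedSpace ℝ E]
    [CompleteSpace E]
    {π : Measure (∀ i, α i)} {g : (∀ i, α i) → E} (hg : Integrable g π)
    (h : ∀ (s : Finset ι) (C : ∀ i, Set (α i)), (∀ i, MeasurableSet (C i)) →
      ∫ x in (s : Set ι).pi C, g x ∂π = 0) :
    g =ᵐ[π] 0 := by
  suffices ∀ A, MeasurableSet A → ∫ x in A, g x ∂π = 0 from
    hg.ae_eq_zero_of_forall_setIntegral_eq_zero fun A hA _ => this A hA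
  intro A hA
  have huniv : ∫ x, g x ∂π = 0 := by simpa using h ∅ (fun _ => Set.univ) fun _ => .univ
  induction A, hA using MeasurableSpace.induction_on_inter generateFrom_squareCylinders.symm
    (isPiSystem_squareCylinders (fun _ => MeasurableSpace.isPiSystem_measurableSet)
      fun _ => .univ) with
  | empty => simp
  | basic t ht =>
    obtain ⟨s, C, hC, rfl⟩ := ht
    exact h s C (by simpa using hC)
  | compl t ht iht => rw [setIntegral_compl ht hg, iht, huniv, sub_zero]
  | iUnion f hdisj hf ihf => simp [integral_iUnion hf hdisj hg.integrableOn, ihf]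

end ProductMeasure

section BernoulliCoordinate

variable {a : ℝ}

theorem isProbabilityMeasure_bernMeasure (ha0 : 0 ≤ a) (ha1 : a ≤ 1) :
    IsProbabilityMeasure (bernMeasure a) :=
  ⟨by simp [bernMeasure, ← ENNReal.ofReal_add ha0 (sub_nonneg.2 ha1)]⟩

theorem integral_bernMeasure (ha0 : 0 ≤ a) (ha1 : a ≤ 1) (g : Bool → ℝ) :
    ∫ u, g u ∂bernMeasure a = a * g true + (1 - a) * g false := by
  have := isProbabilityMeasure_bernMeasure ha0 ha1
  rw [integral_fintype .of_finite]
  simp [bernMeasure, measureReal_def, ha0, ha1, add_comm]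

def normalizedBit (a : ℝ) (u : Bool) : ℝ := ((bif u then 1 else 0) - a) / √(a * (1 - a))

theorem integral_normalizedBit (ha0 : 0 ≤ a) (ha1 : a ≤ 1) :
    ∫ u, normalizedBit a u ∂bernMeasure a = 0 := by
  rw [integral_bernMeasure ha0 ha1]
  simp only [normalizedBit, cond_true, cond_false]
  ring

theorem integral_normalizedBit_mul_self (ha0 : 0 < a) (ha1 : a < 1) :
    ∫ u, normalizedBit a u * normalizedBit a u ∂bernMeasure a = 1 := by
  have hs0 : √(a * (1 - a)) ≠ 0 := (Real.sqrt_pos.2 (by nlinarith)).ne'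
  rw [integral_bernMeasure ha0.le ha1.le]
  simp only [normalizedBit, cond_true, cond_false]
  field_simp
  rw [Real.sq_sqrt (by nlinarith)]
  ring

theorem exists_eq_add_mul_normalizedBit (ha0 : 0 < a) (ha1 : a < 1) (h : Bool → ℝ) :
    ∃ α β : ℝ, ∀ u, h u = α + β * normalizedBit a u := by
  have hs0 : √(a * (1 - a)) ≠ 0 := (Real.sqrt_pos.2 (by nlinarith)).ne'
  refine ⟨h false + (h true - h false) * a, (h true - h false) * √(a * (1 - a)), fun u => ?_⟩
  cases u <;> simp only [normalizedBit, cond_true, cond_false] <;> field_simp <;> ring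

end BernoulliCoordinate

section Walsh

variable {ι : Type*} {a : ℝ} {π : Measure (ι → Bool)}

def walsh (a : ℝ) (S : Finset ι) (x : ι → Bool) : ℝ := ∏ i ∈ S, normalizedBit a (x i)

theorem measurable_walsh (a : ℝ) (S : Finset ι) : Measurable (walsh a S) :=
  Finset.measurable_prod _ fun i _ =>
    (Measurable.of_discrete (f := normalizedBit a)).comp (measurable_pi_apply i)

theorem abs_walsh_le (a : ℝ) (S : Finset ι) (x : ι → Bool) :
    |walsh a S x| ≤ max |normalizedBit a true| |normalizedBit a false| ^ S.card := by
  rw [walsh, Finset.abs_prod, ← Finset.prod_const]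
  exact Finset.prod_le_prod (fun _ _ => abs_nonneg _) fun i _ => by cases x i <;> simp

theorem integral_walsh_mul_walsh [DecidableEq ι] (hπ : IsProductMeasure π (bernMeasure a))
    (ha0 : 0 < a) (ha1 : a < 1) (S T : Finset ι) :
    ∫ x, walsh a S x * walsh a T x ∂π = if S = T then 1 else 0 := by
  have := isProbabilityMeasure_bernMeasure ha0.le ha1.le
  have hprod (x : ι → Bool) : walsh a S x * walsh a T x = ∏ i ∈ S ∪ T,
      (if i ∈ S then normalizedBit a (x i) else 1) *
        (if i ∈ T then normalizedBit a (x i) else 1) := by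
    rw [Finset.prod_mul_distrib, Finset.prod_ite_mem, Finset.prod_ite_mem,
      Finset.union_inter_cancel_left, Finset.union_inter_cancel_right, walsh, walsh]
  simp_rw [hprod]
  rw [hπ.integral_finset_prod (S ∪ T) (g := fun i u =>
    (if i ∈ S then normalizedBit a u else 1) * (if i ∈ T then normalizedBit a u else 1))
    fun i => .of_discrete]
  split_ifs with hST
  · subst hST
    refine Finset.prod_eq_one fun i hi => ?_
    rw [Finset.union_self] at hi
    simpa [hi] using integral_normalizedBit_mul_self ha0 ha1
  · obtain ⟨i, hi⟩ : ∃ i, ¬(i ∈ S ↔ i ∈ T) := by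
      by_contra! h
      exact hST (Finset.ext h)
    refine Finset.prod_eq_zero (i := i) (by rw [Finset.mem_union]; tauto) ?_
    by_cases hiS : i ∈ S
    · have hiT : i ∉ T := fun hiT => hi (iff_of_true hiS hiT)
      simpa [hiS, hiT] using integral_normalizedBit ha0.le ha1.le
    · have hiT : i ∈ T := by tauto
      simpa [hiS, hiT] using integral_normalizedBit ha0.le ha1.le

variable [IsFiniteMeasure π]

theorem memLp_walsh (a : ℝ) (S : Finset ι) : MemLp (walsh a S) 2 π :=
  .of_bound (measurable_walsh a S).aestronglyMeasurable _ (ae_of_all _ (abs_walsh_le a S))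

variable (π) in
def walshLp (a : ℝ) (S : Finset ι) : Lp ℝ 2 π := (memLp_walsh a S).toLp

theorem coeFn_walshLp (a : ℝ) (S : Finset ι) : walshLp π a S =ᵐ[π] walsh a S :=
  MemLp.coeFn_toLp _

theorem integrable_walsh_mul (S : Finset ι) (f : Lp ℝ 2 π) :
    Integrable (fun x => walsh a S x * f x) π :=
  (memLp_walsh a S).integrable_mul (Lp.memLp f)

theorem inner_walshLp (S : Finset ι) (f : Lp ℝ 2 π) :
    ⟪walshLp π a S, f⟫_ℝ = ∫ x, walsh a S x * f x ∂π := by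
  rw [L2.inner_def]
  refine integral_congr_ae ?_
  filter_upwards [coeFn_walshLp (π := π) a S] with x hx
  rw [hx, real_inner_eq_re_inner, RCLike.inner_apply, conj_trivial, mul_comm]
  rfl

theorem orthonormal_walshLp (hπ : IsProductMeasure π (bernMeasure a))
    (ha0 : 0 < a) (ha1 : a < 1) : Orthonormal ℝ (walshLp π a : Finset ι → Lp ℝ 2 π) := by
  classical
  rw [orthonormal_iff_ite]
  intro S T
  rw [inner_walshLp, ← integral_walsh_mul_walsh hπ ha0 ha1 S T]
  exact integral_congr_ae ((coeFn_walshLp a T).mono fun x hx => congrArg (walsh a S x * ·) hx)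

theorem integral_prod_mul_eq_zero_of_forall_inner_walshLp_eq_zero (ha0 : 0 < a) (ha1 : a < 1)
    {f : Lp ℝ 2 π} (hf : ∀ T, ⟪walshLp π a T, f⟫_ℝ = 0) (s : Finset ι) (k : ι → Bool → ℝ) :
    ∫ x, (∏ i ∈ s, k i (x i)) * f x ∂π = 0 := by
  classical
  choose α β hk using fun i => exists_eq_add_mul_normalizedBit ha0 ha1 (k i)
  obtain ⟨c, hc⟩ : ∃ c : Finset ι → ℝ, ∀ x : ι → Bool,
      ∏ i ∈ s, k i (x i) = ∑ T ∈ s.powerset, c T * walsh a T x := by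
    refine ⟨fun T => (∏ i ∈ T, β i) * ∏ i ∈ s \ T, α i, fun x => ?_⟩
    simp_rw [hk, add_comm (α _), Finset.prod_add, walsh, Finset.prod_mul_distrib]
    exact Finset.sum_congr rfl fun T _ => by ring
  simp_rw [hc, Finset.sum_mul, mul_assoc]
  rw [integral_finsetSum _ fun T _ => (integrable_walsh_mul T f).const_mul _]
  refine Finset.sum_eq_zero fun T _ => ?_
  rw [integral_const_mul, ← inner_walshLp, hf, mul_zero]

theorem orthogonal_span_walshLp_eq_bot (ha0 : 0 < a) (ha1 : a < 1) :
    (Submodule.span ℝ (Set.range (walshLp π a : Finset ι → Lp ℝ 2 π)))ᗮ = ⊥ := by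
  refine (Submodule.eq_bot_iff _).2 fun f hf => ?_
  have hf' (T : Finset ι) : ⟪walshLp π a T, f⟫_ℝ = 0 :=
    (Submodule.mem_orthogonal _ f).1 hf _ (Submodule.subset_span ⟨T, rfl⟩)
  refine Lp.eq_zero_iff_ae_eq_zero.2 <|
    ((Lp.memLp f).integrable one_le_two).ae_eq_zero_of_forall_setIntegral_pi_eq_zero
      fun s C hC => ?_
  rw [← integral_indicator (MeasurableSet.pi s.countable_toSet fun i _ => hC i),
    ← integral_prod_mul_eq_zero_of_forall_inner_walshLp_eq_zero ha0 ha1 hf' s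
      fun i => (C i).indicator 1]
  congr 1 with x
  rw [← Set.indicator_pi_one_apply, ← Set.indicator_mul_left]
  simp

def walshBasis (hπ : IsProductMeasure π (bernMeasure a)) (ha0 : 0 < a) (ha1 : a < 1) :
    HilbertBasis (Finset ι) ℝ (Lp ℝ 2 π) :=
  .mkOfOrthogonalEqBot (orthonormal_walshLp hπ ha0 ha1) (orthogonal_span_walshLp_eq_bot ha0 ha1)

@[simp]
theorem coe_walshBasis (hπ : IsProductMeasure π (bernMeasure a)) (ha0 : 0 < a) (ha1 : a < 1) :
    ⇑(walshBasis hπ ha0 ha1) = walshLp π a :=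
  HilbertBasis.coe_mkOfOrthogonalEqBot _ _

end Walsh

theorem one2_eq_walshLp {ι : Type*} (π : Measure (ι → Bool)) [IsProbabilityMeasure π] (a : ℝ) :
    one2 π = walshLp π a ∅ := by
  refine Lp.ext ?_
  filter_upwards [coeFn_walshLp (π := π) a ∅] with x hx
  simp [one2, hx, walsh]

section MarkovOperator

open Filter

variable {ι : Type*} {a b : ℝ}

def corrCoeff (a b : ℝ) : ℝ := √(a * (1 - a)) * √(b * (1 - b))

theorem corrCoeff_pos (ha0 : 0 < a) (ha1 : a < 1) (hb0 : 0 < b) (hb1 : b < 1) :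
    0 < corrCoeff a b :=
  mul_pos (Real.sqrt_pos.2 (by nlinarith)) (Real.sqrt_pos.2 (by nlinarith))

theorem corrCoeff_le_one (ha0 : 0 ≤ a) (ha1 : a ≤ 1) (hb0 : 0 ≤ b) (hb1 : b ≤ 1) :
    corrCoeff a b ≤ 1 :=
  mul_le_one₀ (Real.sqrt_le_one.2 (by nlinarith)) (Real.sqrt_nonneg _)
    (Real.sqrt_le_one.2 (by nlinarith))

theorem corrCoeff_mul_normalizedBit_mul_normalizedBit (ha0 : 0 < a) (ha1 : a < 1) (hb0 : 0 < b)
    (hb1 : b < 1) (u v : Bool) :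
    corrCoeff a b * (normalizedBit a u * normalizedBit b v) =
      ((bif u then 1 else 0) - a) * ((bif v then 1 else 0) - b) := by
  have hsa : √(a * (1 - a)) ≠ 0 := (Real.sqrt_pos.2 (by nlinarith)).ne'
  have hsb : √(b * (1 - b)) ≠ 0 := (Real.sqrt_pos.2 (by nlinarith)).ne'
  simp only [corrCoeff, normalizedBit]
  field_simp

theorem sum_powerset_corrCoeff_pow_mul_walsh_nonneg (ha0 : 0 < a) (ha1 : a < 1) (hb0 : 0 < b)
    (hb1 : b < 1) (I : Finset ι) (x y : ι → Bool) :
    0 ≤ ∑ S ∈ I.powerset, corrCoeff a b ^ S.card * (walsh a S x * walsh b S y) := by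
  have hfactor (u v : Bool) : 0 ≤ 1 + corrCoeff a b * (normalizedBit a u * normalizedBit b v) := by
    rw [corrCoeff_mul_normalizedBit_mul_normalizedBit ha0 ha1 hb0 hb1]
    cases u <;> cases v <;> simp <;> nlinarith
  calc 0 ≤ ∏ i ∈ I, (1 + corrCoeff a b * (normalizedBit a (x i) * normalizedBit b (y i))) :=
        Finset.prod_nonneg fun i _ => hfactor _ _
    _ = _ := by
        rw [Finset.prod_one_add]
        refine Finset.sum_congr rfl fun S _ => ?_
        rw [Finset.prod_mul_distrib, Finset.prod_const, walsh, walsh, Finset.prod_mul_distrib]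

variable {πa πb : Measure (ι → Bool)} [IsFiniteMeasure πa] [IsFiniteMeasure πb]

theorem coeFn_sum_smul_walshLp (s : Finset (Finset ι)) (c : Finset ι → ℝ) :
    ⇑(∑ S ∈ s, c S • walshLp πa a S) =ᵐ[πa] fun y => ∑ S ∈ s, c S * walsh a S y := by
  have h (S : Finset ι) (_ : S ∈ s) : ∀ᵐ y ∂πa, (c S • walshLp πa a S) y = c S * walsh a S y := by
    filter_upwards [Lp.coeFn_smul (c S) (walshLp πa a S), coeFn_walshLp (π := πa) a S]
      with y h₁ h₂
    rw [h₁, Pi.smul_apply, h₂, smul_eq_mul]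
  filter_upwards [Lp.coeFn_fun_finsetSum s fun S => c S • walshLp πa a S,
    (Filter.eventually_all_finset s).2 h] with y h₁ h₂
  rw [h₁]
  exact Finset.sum_congr rfl h₂

theorem sum_powerset_smul_walshLp_nonneg (ha0 : 0 < a) (ha1 : a < 1) (hb0 : 0 < b) (hb1 : b < 1)
    {f : Lp ℝ 2 πa} (hf : 0 ≤ f) (I : Finset ι) :
    0 ≤ ∑ S ∈ I.powerset, (corrCoeff a b ^ S.card * ⟪walshLp πa a S, f⟫_ℝ) • walshLp πb b S := by
  rw [← Lp.coeFn_nonneg]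
  filter_upwards [coeFn_sum_smul_walshLp (πa := πb) (a := b) I.powerset
    fun S => corrCoeff a b ^ S.card * ⟪walshLp πa a S, f⟫_ℝ] with y hy
  have hkernel : ∑ S ∈ I.powerset, (corrCoeff a b ^ S.card * ⟪walshLp πa a S, f⟫_ℝ) * walsh b S y =
      ∫ x, (∑ S ∈ I.powerset, corrCoeff a b ^ S.card * (walsh a S x * walsh b S y)) * f x ∂πa := by
    simp_rw [Finset.sum_mul]
    rw [integral_finsetSum _ fun S _ => ((integrable_walsh_mul S f).const_mul
      (corrCoeff a b ^ S.card * walsh b S y)).congr (ae_of_all _ fun x => by dsimp only; ring)]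
    refine Finset.sum_congr rfl fun S _ => ?_
    rw [inner_walshLp, mul_right_comm, ← integral_const_mul]
    congr 1 with x
    ring
  rw [Pi.zero_apply, hy, hkernel]
  refine integral_nonneg_of_ae ?_
  filter_upwards [(Lp.coeFn_nonneg f).2 hf] with x hx
  exact mul_nonneg (sum_powerset_corrCoeff_pow_mul_walsh_nonneg ha0 ha1 hb0 hb1 I x y) hx

def walshMarkovOp (hπa : IsProductMeasure πa (bernMeasure a))
    (hπb : IsProductMeasure πb (bernMeasure b)) (ha0 : 0 < a) (ha1 : a < 1) (hb0 : 0 < b)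
    (hb1 : b < 1) : Lp ℝ 2 πa →L[ℝ] Lp ℝ 2 πb :=
  (walshBasis hπa ha0 ha1).diagonalMap (walshBasis hπb hb0 hb1) (fun S => corrCoeff a b ^ S.card)
    fun S => by
      rw [norm_pow, Real.norm_of_nonneg (corrCoeff_pos ha0 ha1 hb0 hb1).le]
      exact pow_le_one₀ (corrCoeff_pos ha0 ha1 hb0 hb1).le
        (corrCoeff_le_one ha0.le ha1.le hb0.le hb1.le)

variable (hπa : IsProductMeasure πa (bernMeasure a)) (hπb : IsProductMeasure πb (bernMeasure b))
  (ha0 : 0 < a) (ha1 : a < 1) (hb0 : 0 < b) (hb1 : b < 1)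

theorem walshMarkovOp_walshLp (S : Finset ι) :
    walshMarkovOp hπa hπb ha0 ha1 hb0 hb1 (walshLp πa a S) =
      corrCoeff a b ^ S.card • walshLp πb b S := by
  rw [walshMarkovOp, ← coe_walshBasis hπa ha0 ha1, HilbertBasis.diagonalMap_apply_basis,
    coe_walshBasis]

theorem adjoint_walshMarkovOp_walshLp (S : Finset ι) :
    (walshMarkovOp hπa hπb ha0 ha1 hb0 hb1).adjoint (walshLp πb b S) =
      corrCoeff a b ^ S.card • walshLp πa a S := by
  rw [walshMarkovOp, ← coe_walshBasis hπb hb0 hb1, HilbertBasis.adjoint_diagonalMap_basis,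
    coe_walshBasis, conj_trivial]

theorem injective_walshMarkovOp : Function.Injective (walshMarkovOp hπa hπb ha0 ha1 hb0 hb1) :=
  HilbertBasis.diagonalMap_injective _ _ _ _ fun _ =>
    pow_ne_zero _ (corrCoeff_pos ha0 ha1 hb0 hb1).ne'

theorem denseRange_walshMarkovOp : DenseRange (walshMarkovOp hπa hπb ha0 ha1 hb0 hb1) :=
  HilbertBasis.denseRange_diagonalMap _ _ _ _ fun _ =>
    pow_ne_zero _ (corrCoeff_pos ha0 ha1 hb0 hb1).ne'

theorem walshMarkovOp_nonneg {f : Lp ℝ 2 πa} (hf : 0 ≤ f) :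
    0 ≤ walshMarkovOp hπa hπb ha0 ha1 hb0 hb1 f := by
  have hpowerset : Tendsto (fun I : Finset ι => I.powerset) atTop atTop :=
    tendsto_atTop_finset_of_monotone (fun _ _ => Finset.powerset_mono.2)
      fun S => ⟨S, Finset.mem_powerset_self S⟩
  rw [walshMarkovOp]
  refine isClosed_nonneg.mem_of_tendsto
    (((walshBasis hπa ha0 ha1).hasSum_diagonalMap (walshBasis hπb hb0 hb1) _ _ f).comp hpowerset)
    (.of_forall fun I => ?_)
  simpa only [Function.comp_apply, HilbertBasis.repr_apply_apply, coe_walshBasis,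
    Set.mem_ofPred_eq] using
    sum_powerset_smul_walshLp_nonneg ha0 ha1 hb0 hb1 hf I

end MarkovOperator

section Shift

variable {a : ℝ} {π : Measure (ℤ → Bool)} [IsFiniteMeasure π]

theorem walsh_shiftZinv (S : Finset ℤ) (x : ℤ → Bool) :
    walsh a S (shiftZinv x) = walsh a (S.map (Equiv.subRight 1).toEmbedding) x := by
  simp [walsh, shiftZinv, Finset.prod_map]

theorem koopman_walshLp (hT : MeasurePreserving (shiftZinv (α := Bool)) π π) (S : Finset ℤ) :
    koopman hT (walshLp π a S) = walshLp π a (S.map (Equiv.subRight 1).toEmbedding) := by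
  refine Lp.ext ((Lp.coeFn_compMeasurePreserving _ hT).trans ?_)
  filter_upwards [hT.quasiMeasurePreserving.ae_eq_comp (coeFn_walshLp (π := π) a S),
    coeFn_walshLp (π := π) a (S.map (Equiv.subRight 1).toEmbedding)] with x hx hx'
  rw [hx, hx', Function.comp_apply, walsh_shiftZinv]

end Shift

theorem walshMarkovOp_comp_koopman {a b : ℝ} {πa πb : Measure (ℤ → Bool)} [IsFiniteMeasure πa]
    [IsFiniteMeasure πb] (hπa : IsProductMeasure πa (bernMeasure a))
    (hπb : IsProductMeasure πb (bernMeasure b)) (ha0 : 0 < a) (ha1 : a < 1) (hb0 : 0 < b)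
    (hb1 : b < 1) (hTa : MeasurePreserving (shiftZinv (α := Bool)) πa πa)
    (hTb : MeasurePreserving (shiftZinv (α := Bool)) πb πb) :
    walshMarkovOp hπa hπb ha0 ha1 hb0 hb1 ∘L koopman hTa =
      koopman hTb ∘L walshMarkovOp hπa hπb ha0 ha1 hb0 hb1 :=
  HilbertBasis.diagonalMap_comp_eq_comp_diagonalMap _ _ _ _
    (Finset.map (Equiv.subRight 1).toEmbedding) (by simp [koopman_walshLp])
    (by simp [koopman_walshLp]) fun S => by rw [Finset.card_map]

theorem bernoulli_shifts_quasiSimilar_general (a b : ℝ)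
    (ha0 : 0 < a) (ha1 : a < 1) (hb0 : 0 < b) (hb1 : b < 1)
    (πa πb : Measure (ℤ → Bool)) [IsProbabilityMeasure πa] [IsProbabilityMeasure πb]
    (hπa : IsProductMeasure πa (bernMeasure a)) (hπb : IsProductMeasure πb (bernMeasure b))
    (hSainv : MeasurePreserving (shiftZinv (α := Bool)) πa πa)
    (hSbinv : MeasurePreserving (shiftZinv (α := Bool)) πb πb) :
    ∃ W : Lp ℝ 2 πa →L[ℝ] Lp ℝ 2 πb,
      IsMarkovQuasiSimilarity (koopman hSainv) (koopman hSbinv) W := by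
  refine ⟨walshMarkovOp hπa hπb ha0 ha1 hb0 hb1,
    fun f hf => walshMarkovOp_nonneg hπa hπb ha0 ha1 hb0 hb1 hf, ?_, ?_,
    injective_walshMarkovOp hπa hπb ha0 ha1 hb0 hb1,
    denseRange_walshMarkovOp hπa hπb ha0 ha1 hb0 hb1,
    walshMarkovOp_comp_koopman hπa hπb ha0 ha1 hb0 hb1 hSainv hSbinv⟩
  · rw [one2_eq_walshLp πa a, one2_eq_walshLp πb b, walshMarkovOp_walshLp]
    simp
  · rw [one2_eq_walshLp πa a, one2_eq_walshLp πb b, adjoint_walshMarkovOp_walshLp]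
    simp

/-- For any `0 < a < 1` and `0 < b < 1`, the Bernoulli shift on
`({0,1}^ℤ, μ_a^⊗ℤ)` is quasi-similar to the Bernoulli shift on `({0,1}^ℤ, μ_b^⊗ℤ)`. -/
theorem bernoulli_shifts_quasiSimilar (a b : ℝ)
    (ha0 : 0 < a) (ha1 : a < 1) (hb0 : 0 < b) (hb1 : b < 1)
    (πa πb : Measure (ℤ → Bool)) [IsProbabilityMeasure πa] [IsProbabilityMeasure πb]
    (hπa : IsProductMeasure πa (bernMeasure a)) (hπb : IsProductMeasure πb (bernMeasure b))
    (hSa : MeasurePreserving (shiftZ (α := Bool)) πa πa)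
    (hSainv : MeasurePreserving (shiftZinv (α := Bool)) πa πa)
    (hSb : MeasurePreserving (shiftZ (α := Bool)) πb πb)
    (hSbinv : MeasurePreserving (shiftZinv (α := Bool)) πb πb) :
    ∃ W : Lp ℝ 2 πa →L[ℝ] Lp ℝ 2 πb,
      IsMarkovQuasiSimilarity (koopman hSainv) (koopman hSbinv) W :=
  bernoulli_shifts_quasiSimilar_general a b ha0 ha1 hb0 hb1 πa πb hπa hπb hSainv hSbinv
end
end

section
/- Fix 0 < a < 1/2. Let μ be Lebesgue measure on [0,1], let S : [0,1]^ℤ → [0,1]^ℤ be the left shift preserving μ^⊗ℤ, let 𝒜 be the sub-σ-algebra of the product σ-algebra generated by the sets {x : x_n ∈ [0,a]}, n ∈ ℤ, and let ℬ be the sub-σ-algebra generated by the sets {x : x_n ∈ [0,1/2]}, n ∈ ℤ. Then the operator W : L²(𝒜) → L²(ℬ), given by restricting the conditional expectation onto ℬ to the 𝒜-measurable functions in L²(μ^⊗ℤ), is injective. -/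
open MeasureTheory
open scoped symmDiff

noncomputable section

/-- Lebesgue measure on `[0,1]`. -/
def μ01 : Measure ℝ := volume.restrict (Set.Icc 0 1)

/-- The sub-σ-algebra of the product σ-algebra on `[0,1]^ℤ` generated by the sets
`{x : x n ∈ [0,c]}`, `n ∈ ℤ`. -/
def coordAlg (c : ℝ) : MeasurableSpace (ℤ → ℝ) :=
  MeasurableSpace.generateFrom {s | ∃ n : ℤ, s = {x : ℤ → ℝ | x n ∈ Set.Icc 0 c}}

/-- The operator `W : L²(mA) → L²(mB)` obtained by restricting the conditional
expectation (orthogonal projection) onto `L²(mB)` to the subspace `L²(mA)`. -/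
def condexpW {X : Type*} (mA mB : MeasurableSpace X) [m0 : MeasurableSpace X]
    (π : Measure X) (hB : mB ≤ m0) :
    lpMeas ℝ ℝ mA 2 π →L[ℝ] lpMeas ℝ ℝ mB 2 π :=
  (condExpL2 ℝ ℝ hB).comp (Submodule.subtypeL (lpMeas ℝ ℝ mA 2 π))

/-!
Write `p = μ s ≤ q = μ t < 1`, `A_T = {x | x n ∈ s ∀ n ∈ T}` and `B_S = {x | x n ∈ t ∀ n ∈ S}`.
Conditioned on whether `x n ∈ s`, the event `x n ∈ t` has probability `β + γ 1_s (x n)` with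
`β = (q - p) / (1 - p)` and `γ = (1 - q) / (1 - p)`; by independence of the
coordinates, `E[1_{B_S} | 𝒜] = ∏_{n ∈ S} (β + γ 1_s (x n)) = ∑_{T ⊆ S} β^|S \ T| γ^|T| 1_{A_T}`.
If `f ∈ L²(𝒜)` has `E[f | ℬ] = 0`, then `0 = ∫_{B_S} f = ∑_{T ⊆ S} β^|S \ T| γ^|T| ∫_{A_T} f`,
a triangular system with diagonal `γ^|S| ≠ 0`. Hence `f` integrates to zero on every `A_T`, and
these sets form a π-system generating `𝒜`, so `f = 0`.
-/

open MeasurableSpace Finset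

section SubSigmaAlgebra

variable {X E : Type*} {m m0 : MeasurableSpace X} {μ : Measure X}
  [NormedAddCommGroup E] [NormedSpace ℝ E]

theorem setIntegral_eq_of_isPiSystem {C : Set (Set X)} (hm : m ≤ m0)
    (h_gen : m = generateFrom C) (hC : IsPiSystem C) (h_univ : Set.univ ∈ C)
    {f g : X → E} (hf : Integrable f μ) (hg : Integrable g μ)
    (h_basic : ∀ s ∈ C, ∫ x in s, f x ∂μ = ∫ x in s, g x ∂μ)
    {s : Set X} (hs : MeasurableSet[m] s) : ∫ x in s, f x ∂μ = ∫ x in s, g x ∂μ := by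
  induction s, hs using induction_on_inter h_gen hC with
  | empty => simp
  | basic t ht => exact h_basic t ht
  | compl t ht iht =>
    have h_whole := h_basic _ h_univ
    rw [setIntegral_univ, setIntegral_univ] at h_whole
    rw [setIntegral_compl (hm t ht) hf, setIntegral_compl (hm t ht) hg, h_whole, iht]
  | iUnion F hFd hFm iF =>
    rw [integral_iUnion (fun i => hm _ (hFm i)) hFd hf.integrableOn,
      integral_iUnion (fun i => hm _ (hFm i)) hFd hg.integrableOn]
    simp only [iF]

theorem lpMeas.eq_zero_of_forall_setIntegral_eq_zero_of_isPiSystem {p : ENNReal} [Fact (1 ≤ p)]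
    [IsFiniteMeasure μ] {C : Set (Set X)} (hm : m ≤ m0) (h_gen : m = generateFrom C)
    (hC : IsPiSystem C) (h_univ : Set.univ ∈ C) (hp : p ≠ ⊤) (f : lpMeas ℝ ℝ m p μ)
    (hf : ∀ s ∈ C, ∫ x in s, (f : Lp ℝ p μ) x ∂μ = 0) : f = 0 := by
  have hf_int : Integrable (f : Lp ℝ p μ) μ := (Lp.memLp _).integrable Fact.out
  refine Subtype.ext (Lp.eq_zero_iff_ae_eq_zero.mpr ?_)
  refine lpMeas.ae_eq_zero_of_forall_setIntegral_eq_zero hm f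
    (zero_lt_one.trans_le Fact.out).ne' hp (fun _ _ _ => hf_int.integrableOn) fun s hs _ => ?_
  simpa using setIntegral_eq_of_isPiSystem hm h_gen hC h_univ hf_int (integrable_zero _ _ μ)
    (by simpa using hf) hs

theorem integral_mul_condExp (hm : m ≤ m0) [SigmaFinite (μ.trim hm)] {f g : X → ℝ}
    (hf : AEStronglyMeasurable[m] f μ) (hfg : Integrable (f * g) μ) (hg : Integrable g μ) :
    ∫ x, f x * g x ∂μ = ∫ x, f x * μ[g | m] x ∂μ := by
  rw [← integral_condExp hm]
  exact integral_congr_ae (condExp_mul_of_aestronglyMeasurable_left hf hfg hg)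

end SubSigmaAlgebra

theorem setIntegral_eq_zero_of_condexpW_eq_zero {X : Type*} {mA mB : MeasurableSpace X}
    [m0 : MeasurableSpace X] {μ : Measure X} [IsFiniteMeasure μ] (hB : mB ≤ m0)
    {f : lpMeas ℝ ℝ mA 2 μ} (hf : condexpW mA mB μ hB f = 0) {s : Set X}
    (hs : MeasurableSet[mB] s) : ∫ x in s, (f : Lp ℝ 2 μ) x ∂μ = 0 := by
  rw [← integral_condExpL2_eq (𝕜 := ℝ) hB _ hs (measure_ne_top μ s)]
  change ∫ x in s, ((condexpW mA mB μ hB f : Lp ℝ 2 μ) : X → ℝ) x ∂μ = 0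
  rw [hf, ZeroMemClass.coe_zero]
  exact integral_eq_zero_of_ae (ae_restrict_of_ae (Lp.coeFn_zero ℝ 2 μ))

section Combinatorics

variable {ι R : Type*} [DecidableEq ι] [CommSemiring R]

theorem prod_ite_mem_one_eq_pow_card_sdiff (S T : Finset ι) (x : R) :
    ∏ n ∈ S, (if n ∈ T then 1 else x) = x ^ #(S \ T) := by
  rw [prod_ite, prod_const_one, one_mul, prod_const, sdiff_eq_filter]

theorem sum_powerset_mul_pow_card_union {β γ p q : R} (h1 : β + γ = 1) (hq : β + γ * p = q)
    (S T' : Finset ι) :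
    ∑ T ∈ S.powerset, β ^ #(S \ T) * γ ^ #T * p ^ #(T ∪ T') = p ^ #T' * q ^ #(S \ T') := by
  have hterm (T : Finset ι) : β ^ #(S \ T) * γ ^ #T * p ^ #(T ∪ T')
      = p ^ #T' * ((∏ n ∈ T, γ * if n ∈ T' then 1 else p) * ∏ _n ∈ S \ T, β) := by
    rw [← card_sdiff_add_card, pow_add, prod_mul_distrib, prod_ite_mem_one_eq_pow_card_sdiff,
      prod_const, prod_const]
    ring
  have hfactor (n : ι) : (γ * if n ∈ T' then 1 else p) + β = if n ∈ T' then 1 else q := by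
    split_ifs
    · rw [mul_one, add_comm, h1]
    · rw [add_comm, hq]
  simp_rw [hterm, ← mul_sum, ← prod_add, hfactor, prod_ite_mem_one_eq_pow_card_sdiff]

end Combinatorics

theorem eq_zero_of_sum_powerset_eq_zero {ι K : Type*} [DecidableEq ι] [CommSemiring K]
    [NoZeroDivisors K] {β γ : K} (hγ : γ ≠ 0) {F : Finset ι → K}
    (h : ∀ S, ∑ T ∈ S.powerset, β ^ #(S \ T) * γ ^ #T * F T = 0) (S : Finset ι) : F S = 0 := by
  induction S using Finset.strongInduction with
  | _ S ih =>
    have hS := h S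
    rw [← add_sum_erase _ _ (mem_powerset_self S), sum_eq_zero fun T hT => ?_, add_zero,
      Finset.sdiff_self, card_empty, pow_zero, one_mul] at hS
    · exact (mul_eq_zero.mp hS).resolve_left (pow_ne_zero _ hγ)
    · obtain ⟨hTS, hT⟩ := mem_erase.mp hT
      rw [ih T ((mem_powerset.mp hT).lt_of_ne hTS), mul_zero]

section Cylinders

variable {ι α : Type*}

abbrev coordPreimageAlg (s : Set α) : MeasurableSpace (ι → α) :=
  generateFrom {A | ∃ n : ι, A = {x | x n ∈ s}}

theorem coordPreimageAlg_le [MeasurableSpace α] {s : Set α} (hs : MeasurableSet s) :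
    coordPreimageAlg s ≤ (MeasurableSpace.pi : MeasurableSpace (ι → α)) :=
  generateFrom_le fun _ ⟨n, hA⟩ => hA ▸ measurable_pi_apply n hs

theorem measurableSet_finset_pi [MeasurableSpace α] {u : Set α} (hu : MeasurableSet u)
    (T : Finset ι) : MeasurableSet ((T : Set ι).pi fun _ => u) :=
  MeasurableSet.pi T.countable_toSet fun _ _ => hu

theorem measurableSet_coordPreimageAlg_pi (s : Set α) (T : Finset ι) :
    MeasurableSet[coordPreimageAlg s] ((T : Set ι).pi fun _ => s) := by
  rw [Set.pi_def]
  exact MeasurableSet.biInter T.countable_toSet fun n _ => measurableSet_generateFrom ⟨n, rfl⟩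

theorem isPiSystem_range_pi (s : Set α) :
    IsPiSystem (Set.range fun T : Finset ι => (T : Set ι).pi fun _ => s) := by
  classical
  rintro _ ⟨T₁, rfl⟩ _ ⟨T₂, rfl⟩ -
  exact ⟨T₁ ∪ T₂, by simp only [coe_union, Set.union_pi]⟩

theorem univ_mem_range_pi (s : Set α) :
    Set.univ ∈ Set.range fun T : Finset ι => (T : Set ι).pi fun _ => s :=
  ⟨∅, by simp only [coe_empty, Set.empty_pi]⟩

theorem coordPreimageAlg_eq_generateFrom_range_pi (s : Set α) :
    coordPreimageAlg s =
      generateFrom (Set.range fun T : Finset ι => (T : Set ι).pi fun _ => s) := by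
  refine le_antisymm (generateFrom_le ?_) (generateFrom_le ?_)
  · rintro _ ⟨n, rfl⟩
    exact measurableSet_generateFrom ⟨{n}, by ext; simp⟩
  · rintro _ ⟨T, rfl⟩
    exact measurableSet_coordPreimageAlg_pi s T

end Cylinders

namespace IsProductMeasure

variable {ι α : Type*} [MeasurableSpace α] {π : Measure (ι → α)} {μ : Measure α}

theorem isProbabilityMeasure (hπ : IsProductMeasure π μ) : IsProbabilityMeasure π :=
  ⟨by simpa using hπ ∅ (fun _ => Set.univ) fun _ => MeasurableSet.univ⟩

theorem measureReal_pi_inter_pi [DecidableEq ι] (hπ : IsProductMeasure π μ) {s t : Set α}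
    (hst : s ⊆ t) (hs : MeasurableSet s) (ht : MeasurableSet t) (T S : Finset ι) :
    π.real (((T : Set ι).pi fun _ => s) ∩ (S : Set ι).pi fun _ => t)
      = μ.real s ^ #T * μ.real t ^ #(S \ T) := by
  have h_eq : (((T : Set ι).pi fun _ => s) ∩ (S : Set ι).pi fun _ => t)
      = {x | ∀ n ∈ T ∪ S, x n ∈ if n ∈ T then s else t} := by
    ext x
    simp only [Set.mem_inter_iff, Set.mem_pi, mem_coe, mem_union, Set.mem_ofPred_eq]
    grind
  rw [measureReal_def, h_eq, hπ _ _ fun n => by split_ifs <;> assumption,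
    ← union_sdiff_self_eq_union, prod_union disjoint_sdiff,
    prod_congr rfl fun n hn => congrArg μ (if_pos hn),
    prod_congr rfl fun n hn => congrArg μ (if_neg (mem_sdiff.mp hn).2), prod_const, prod_const,
    ENNReal.toReal_mul, ENNReal.toReal_pow, ENNReal.toReal_pow, measureReal_def, measureReal_def]

theorem measureReal_pi [DecidableEq ι] (hπ : IsProductMeasure π μ) {s : Set α}
    (hs : MeasurableSet s) (T : Finset ι) :
    π.real ((T : Set ι).pi fun _ => s) = μ.real s ^ #T := by
  simpa using hπ.measureReal_pi_inter_pi subset_rfl hs hs T ∅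

theorem condExp_indicator_pi [DecidableEq ι] (hπ : IsProductMeasure π μ) {s t : Set α}
    (hst : s ⊆ t) (hs : MeasurableSet s) (ht : MeasurableSet t) {β γ : ℝ} (h1 : β + γ = 1)
    (hq : β + γ * μ.real s = μ.real t) (S : Finset ι) :
    π[((S : Set ι).pi fun _ => t).indicator 1 | coordPreimageAlg s] =ᵐ[π]
      fun x => ∑ T ∈ S.powerset,
        β ^ #(S \ T) * γ ^ #T * ((T : Set ι).pi fun _ => s).indicator 1 x := by
  have := hπ.isProbabilityMeasure
  have hm := coordPreimageAlg_le (ι := ι) hs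
  have h_ind (T : Finset ι) {u : Set α} (hu : MeasurableSet u) :
      Integrable (((T : Set ι).pi fun _ => u).indicator (1 : (ι → α) → ℝ)) π :=
    (integrable_const 1).indicator (measurableSet_finset_pi hu T)
  have h_int : Integrable (fun x => ∑ T ∈ S.powerset,
      β ^ #(S \ T) * γ ^ #T * ((T : Set ι).pi fun _ => s).indicator (1 : (ι → α) → ℝ) x) π :=
    integrable_finsetSum _ fun T _ => (h_ind T hs).const_mul _
  refine (ae_eq_condExp_of_forall_setIntegral_eq hm (h_ind S ht)
    (fun _ _ _ => h_int.integrableOn) (fun A hA _ => ?_) ?_).symm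
  · refine setIntegral_eq_of_isPiSystem hm (coordPreimageAlg_eq_generateFrom_range_pi s)
      (isPiSystem_range_pi s) (univ_mem_range_pi s) h_int (h_ind S ht) ?_ hA
    rintro _ ⟨T', rfl⟩
    rw [integral_finsetSum _ fun T _ => (h_ind T hs).integrableOn.const_mul _]
    simp_rw [integral_const_mul, integral_indicator_one (measurableSet_finset_pi hs _),
      integral_indicator_one (measurableSet_finset_pi ht _),
      measureReal_restrict_apply (measurableSet_finset_pi hs _),
      measureReal_restrict_apply (measurableSet_finset_pi ht _)]
    simp_rw [← Set.union_pi, ← coe_union, hπ.measureReal_pi hs, Set.inter_comm,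
      hπ.measureReal_pi_inter_pi hst hs ht]
    exact sum_powerset_mul_pow_card_union h1 hq S T'
  · exact (Finset.stronglyMeasurable_fun_sum _ fun T _ => (stronglyMeasurable_const.indicator
      (measurableSet_coordPreimageAlg_pi s T)).const_mul _).aestronglyMeasurable

theorem setIntegral_pi_eq_sum [DecidableEq ι] (hπ : IsProductMeasure π μ) {s t : Set α}
    (hst : s ⊆ t) (hs : MeasurableSet s) (ht : MeasurableSet t) {β γ : ℝ} (h1 : β + γ = 1)
    (hq : β + γ * μ.real s = μ.real t) {f : (ι → α) → ℝ}
    (hf : AEStronglyMeasurable[coordPreimageAlg s] f π) (hf_int : Integrable f π)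
    (S : Finset ι) :
    ∫ x in (S : Set ι).pi (fun _ => t), f x ∂π
      = ∑ T ∈ S.powerset, β ^ #(S \ T) * γ ^ #T * ∫ x in (T : Set ι).pi (fun _ => s), f x ∂π := by
  have := hπ.isProbabilityMeasure
  have h_mul_ind (A : Set (ι → α)) : f * A.indicator 1 = A.indicator f := by
    ext x
    by_cases hx : x ∈ A <;> simp [hx]
  have h_setIntegral (T : Finset ι) {u : Set α} (hu : MeasurableSet u) :
      ∫ x, f x * ((T : Set ι).pi fun _ => u).indicator 1 x ∂π
        = ∫ x in (T : Set ι).pi (fun _ => u), f x ∂π := by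
    rw [← integral_indicator (measurableSet_finset_pi hu T), ← h_mul_ind]
    rfl
  have h_int (T : Finset ι) {u : Set α} (hu : MeasurableSet u) :
      Integrable (fun x => f x * ((T : Set ι).pi fun _ => u).indicator 1 x) π := by
    have h := hf_int.indicator (measurableSet_finset_pi hu T)
    rwa [← h_mul_ind] at h
  calc ∫ x in (S : Set ι).pi (fun _ => t), f x ∂π
      = ∫ x, f x * ((S : Set ι).pi fun _ => t).indicator 1 x ∂π := (h_setIntegral S ht).symm
    _ = ∫ x, f x * π[((S : Set ι).pi fun _ => t).indicator 1 | coordPreimageAlg s] x ∂π :=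
      integral_mul_condExp (coordPreimageAlg_le hs) hf (h_int S ht)
        ((integrable_const 1).indicator (measurableSet_finset_pi ht S))
    _ = ∫ x, ∑ T ∈ S.powerset, β ^ #(S \ T) * γ ^ #T *
          (f x * ((T : Set ι).pi fun _ => s).indicator 1 x) ∂π := by
      refine integral_congr_ae ?_
      filter_upwards [hπ.condExp_indicator_pi hst hs ht h1 hq S] with x hx
      rw [hx, mul_sum]
      exact sum_congr rfl fun T _ => mul_left_comm _ _ _
    _ = ∑ T ∈ S.powerset, β ^ #(S \ T) * γ ^ #T * ∫ x in (T : Set ι).pi (fun _ => s), f x ∂π := by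
      rw [integral_finsetSum _ fun T _ => (h_int T hs).const_mul _]
      simp_rw [integral_const_mul, h_setIntegral _ hs]

theorem condexpW_coordPreimageAlg_injective [IsFiniteMeasure μ] (hπ : IsProductMeasure π μ)
    {s t : Set α} (hst : s ⊆ t) (hs : MeasurableSet s) (ht : MeasurableSet t) (ht1 : μ t < 1)
    (hB : coordPreimageAlg t ≤ (MeasurableSpace.pi : MeasurableSpace (ι → α))) :
    Function.Injective (condexpW (coordPreimageAlg s) (coordPreimageAlg t) π hB) := by
  classical
  have := hπ.isProbabilityMeasure
  have hq1 : μ.real t < 1 := ENNReal.toReal_lt_of_lt_ofReal (by simpa using ht1)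
  have hp1 : μ.real s < 1 := (measureReal_mono hst).trans_lt hq1
  obtain ⟨β, γ, hγ, h1, hq⟩ :
      ∃ β γ : ℝ, γ ≠ 0 ∧ β + γ = 1 ∧ β + γ * μ.real s = μ.real t := by
    have hp1' : 1 - μ.real s ≠ 0 := by linarith
    refine ⟨(μ.real t - μ.real s) / (1 - μ.real s), (1 - μ.real t) / (1 - μ.real s),
      div_ne_zero (by linarith) hp1', ?_, ?_⟩ <;> field_simp <;> ring
  rw [injective_iff_map_eq_zero]
  intro f hf
  have hf_int : Integrable (f : Lp ℝ 2 π) π := (Lp.memLp _).integrable one_le_two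
  have h_cyl : ∀ T : Finset ι, ∫ x in (T : Set ι).pi (fun _ => s), (f : Lp ℝ 2 π) x ∂π = 0 := by
    refine eq_zero_of_sum_powerset_eq_zero (β := β) hγ fun S => ?_
    rw [← hπ.setIntegral_pi_eq_sum hst hs ht h1 hq (lpMeas.aestronglyMeasurable f) hf_int S]
    exact setIntegral_eq_zero_of_condexpW_eq_zero hB hf (measurableSet_coordPreimageAlg_pi t S)
  refine lpMeas.eq_zero_of_forall_setIntegral_eq_zero_of_isPiSystem (coordPreimageAlg_le hs)
    (coordPreimageAlg_eq_generateFrom_range_pi s) (isPiSystem_range_pi s) (univ_mem_range_pi s)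
    (by norm_num) f ?_
  rintro _ ⟨T, rfl⟩
  exact h_cyl T

end IsProductMeasure

instance : IsProbabilityMeasure μ01 :=
  ⟨by simp [μ01]⟩

theorem shift_condexp_injective_general (a : ℝ) (ha1 : a < 1 / 2)
    (π : Measure (ℤ → ℝ)) (hπ : IsProductMeasure π μ01)
    [hB : Fact (coordAlg (1 / 2) ≤ (inferInstance : MeasurableSpace (ℤ → ℝ)))] :
    Function.Injective (condexpW (coordAlg a) (coordAlg (1 / 2)) π hB.out) := by
  have h_half : μ01 (Set.Icc 0 (1 / 2)) < 1 := by
    rw [μ01, Measure.restrict_apply measurableSet_Icc,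
      Set.Icc_inter_Icc, Real.volume_Icc]
    norm_num
  -- `coordAlg c` is `coordPreimageAlg (Set.Icc 0 c)` by definition.
  exact hπ.condexpW_coordPreimageAlg_injective (Set.Icc_subset_Icc_right ha1.le)
    measurableSet_Icc measurableSet_Icc h_half hB.out

/-- Fix `0 < a < 1/2` and let `π = μ^⊗ℤ` be the product of Lebesgue
measure on `[0,1]`, preserved by the shift `S`. With `𝒜 = coordAlg a` and
`ℬ = coordAlg (1/2)` the sub-σ-algebras generated by the coordinate sets
`{x : x n ∈ [0,a]}` resp. `{x : x n ∈ [0,1/2]}`, the operator `W : L²(𝒜) → L²(ℬ)`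
obtained by restricting the conditional expectation onto `ℬ` to `L²(𝒜)` is injective. -/
theorem shift_condexp_injective (a : ℝ) (ha0 : 0 < a) (ha1 : a < 1 / 2)
    (π : Measure (ℤ → ℝ)) [IsProbabilityMeasure π] (hπ : IsProductMeasure π μ01)
    (hS : MeasurePreserving (shiftZ (α := ℝ)) π π)
    (hSinv : MeasurePreserving (shiftZinv (α := ℝ)) π π)
    [hA : Fact (coordAlg a ≤ (inferInstance : MeasurableSpace (ℤ → ℝ)))]
    [hB : Fact (coordAlg (1 / 2) ≤ (inferInstance : MeasurableSpace (ℤ → ℝ)))] :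
    Function.Injective (condexpW (coordAlg a) (coordAlg (1 / 2)) π hB.out) :=
  shift_condexp_injective_general a ha1 π hπ (hB := hB)
end
end

section
/- Fix 0 < a < 1/2. Let μ be Lebesgue measure on [0,1], let S : [0,1]^ℤ → [0,1]^ℤ be the left shift preserving μ^⊗ℤ, let 𝒜 be the sub-σ-algebra of the product σ-algebra generated by the sets {x : x_n ∈ [0,a]}, n ∈ ℤ, and let ℬ be the sub-σ-algebra generated by the sets {x : x_n ∈ [0,1/2]}, n ∈ ℤ. Then the image under the conditional expectation E[·|ℬ] of the subspace L²(𝒜) is dense in L²(ℬ). -/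
open MeasureTheory
open scoped symmDiff

noncomputable section

/-!
If `g ∈ L²(ℬ)` is orthogonal to `E[L²(𝒜) | ℬ]`, it is orthogonal to `L²(𝒜)`, so its integral
vanishes on every cylinder `{x : x n ∈ [0,a] for n ∈ S}`. By independence of the coordinates and
`[0,a] ⊆ [0,1/2]`, on `ℬ` the measure `π` restricted to this cylinder is `(2a)^|S|` times `π`
restricted to `{x : x n ∈ [0,1/2] for n ∈ S}`, so the integral of `g` vanishes on all of these
cylinders as well. They form a π-system generating `ℬ`, hence `g = 0`.
-/

open MeasurableSpace
open scoped ENNReal RealInnerProductSpace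

variable {α : Type*}

theorem MeasureTheory.Integrable.ae_eq_zero_of_forall_setIntegral_isPiSystem {E : Type*}
    [NormedAddCommGroup E] [NormedSpace ℝ E] [CompleteSpace E] {m0 : MeasurableSpace α}
    {μ : Measure α} {s : Set (Set α)} (h_eq : m0 = generateFrom s) (h_inter : IsPiSystem s)
    (h_univ : Set.univ ∈ s) {f : α → E} (hf : Integrable f μ)
    (h_zero : ∀ t ∈ s, ∫ x in t, f x ∂μ = 0) : f =ᵐ[μ] 0 := by
  suffices ∀ t, MeasurableSet t → ∫ x in t, f x ∂μ = 0 from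
    hf.ae_eq_zero_of_forall_setIntegral_eq_zero fun t ht _ => this t ht
  intro t ht
  induction t, ht using induction_on_inter h_eq h_inter with
  | empty => simp
  | basic t ht => exact h_zero t ht
  | compl t ht iht =>
    rw [← add_left_cancel_iff, integral_add_compl ht hf, iht, ← setIntegral_univ,
      h_zero _ h_univ, zero_add]
  | iUnion t hd ht iht => rw [integral_iUnion ht hd hf.integrableOn, tsum_congr iht, tsum_zero]

theorem MeasureTheory.StronglyMeasurable.ae_eq_zero_of_forall_setIntegral_isPiSystem {E : Type*}
    [NormedAddCommGroup E] [NormedSpace ℝ E] [CompleteSpace E] {m m0 : MeasurableSpace α}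
    {μ : Measure α} (hm : m ≤ m0) {s : Set (Set α)} (h_eq : m = generateFrom s)
    (h_inter : IsPiSystem s) (h_univ : Set.univ ∈ s) {f : α → E} (hf : StronglyMeasurable[m] f)
    (hfi : Integrable f μ) (h_zero : ∀ t ∈ s, ∫ x in t, f x ∂μ = 0) : f =ᵐ[μ] 0 := by
  refine ae_eq_of_ae_eq_trim <| (hfi.trim hm hf).ae_eq_zero_of_forall_setIntegral_isPiSystem
    h_eq h_inter h_univ fun t ht => ?_
  rw [← setIntegral_trim hm hf (h_eq ▸ measurableSet_generateFrom ht), h_zero t ht]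

theorem denseRange_condexpW_of {X : Type*} {mA mB : MeasurableSpace X} [m0 : MeasurableSpace X]
    {μ : Measure X} [IsFiniteMeasure μ] (hA : mA ≤ m0) (hB : mB ≤ m0)
    (h : ∀ g : X → ℝ, StronglyMeasurable[mB] g → Integrable g μ →
      (∀ s, MeasurableSet[mA] s → ∫ x in s, g x ∂μ = 0) → g =ᵐ[μ] 0) :
    DenseRange (condexpW mA mB μ hB) := by
  have : Fact (mB ≤ m0) := ⟨hB⟩
  rw [DenseRange, ← ContinuousLinearMap.coe_coe, ← LinearMap.coe_range,
    Submodule.dense_iff_topologicalClosure_eq_top, Submodule.topologicalClosure_eq_top_iff,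
    Submodule.eq_bot_iff]
  intro g hg
  have hg_meas : AEStronglyMeasurable[mB] ((g : Lp ℝ 2 μ) : X → ℝ) μ :=
    lpMeas.aestronglyMeasurable g
  have h_inner (f : lpMeas ℝ ℝ mA 2 μ) : ⟪(f : Lp ℝ 2 μ), (g : Lp ℝ 2 μ)⟫ = 0 := by
    rw [← inner_condExpL2_eq_inner_fun hB _ _ hg_meas]
    exact (Submodule.mem_orthogonal _ g).mp hg _ ⟨f, rfl⟩
  have h_setIntegral (s : Set X) (hs : MeasurableSet[mA] s) :
      ∫ x in s, (g : Lp ℝ 2 μ) x ∂μ = 0 := by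
    rw [← L2.inner_indicatorConstLp_one (hA s hs) (measure_ne_top μ s)]
    exact h_inner ⟨_, mem_lpMeas_indicatorConstLp hA hs (measure_ne_top μ s)⟩
  have hg_int : Integrable ((g : Lp ℝ 2 μ) : X → ℝ) μ :=
    (Lp.memLp (g : Lp ℝ 2 μ)).integrable one_le_two
  have hg_zero : hg_meas.mk _ =ᵐ[μ] 0 :=
    h _ hg_meas.stronglyMeasurable_mk (hg_int.congr hg_meas.ae_eq_mk) fun s hs => by
      rw [← h_setIntegral s hs]
      exact integral_congr_ae (ae_restrict_of_ae hg_meas.ae_eq_mk.symm)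
  exact Submodule.coe_eq_zero.mp <|
    Lp.ext (hg_meas.ae_eq_mk.trans <| hg_zero.trans (Lp.coeFn_zero ℝ 2 μ).symm)

def cylIcc (c : ℝ) (S : Finset ℤ) : Set (ℤ → ℝ) := {x | ∀ n ∈ S, x n ∈ Set.Icc 0 c}

theorem measurableSet_cylIcc (c : ℝ) (S : Finset ℤ) :
    MeasurableSet[coordAlg c] (cylIcc c S) := by
  rw [show cylIcc c S = ⋂ n ∈ S, {x : ℤ → ℝ | x n ∈ Set.Icc 0 c} by ext; simp [cylIcc]]
  exact .biInter S.countable_toSet fun n _ => measurableSet_generateFrom ⟨n, rfl⟩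

theorem cylIcc_union (c : ℝ) (S T : Finset ℤ) :
    cylIcc c (S ∪ T) = cylIcc c S ∩ cylIcc c T := by
  ext x
  simp [cylIcc, or_imp, forall_and, -Set.mem_Icc]

theorem isPiSystem_range_cylIcc (c : ℝ) : IsPiSystem (Set.range (cylIcc c)) := by
  rintro _ ⟨S, rfl⟩ _ ⟨T, rfl⟩ -
  exact ⟨S ∪ T, cylIcc_union c S T⟩

theorem cylIcc_empty (c : ℝ) : cylIcc c ∅ = Set.univ := by
  simp [cylIcc]

theorem coordAlg_eq_generateFrom_cylIcc (c : ℝ) :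
    coordAlg c = generateFrom (Set.range (cylIcc c)) := by
  refine le_antisymm (generateFrom_le ?_) (generateFrom_le ?_)
  · rintro _ ⟨n, rfl⟩
    exact measurableSet_generateFrom ⟨{n}, by ext; simp [cylIcc]⟩
  · rintro _ ⟨S, rfl⟩
    exact measurableSet_cylIcc c S

theorem μ01_Icc {c : ℝ} (hc : c ≤ 1) : μ01 (Set.Icc 0 c) = ENNReal.ofReal c := by
  rw [μ01, Measure.restrict_apply measurableSet_Icc,
    Set.inter_eq_self_of_subset_left (Set.Icc_subset_Icc le_rfl hc), Real.volume_Icc, sub_zero]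

theorem measure_cylIcc_inter_cylIcc {π : Measure (ℤ → ℝ)} (hπ : IsProductMeasure π μ01)
    {a b : ℝ} (hab : a ≤ b) (hb : b ≤ 1) (S T : Finset ℤ) :
    π (cylIcc a S ∩ cylIcc b T) =
      ENNReal.ofReal a ^ S.card * ENNReal.ofReal b ^ (T \ S).card := by
  classical
  let C : ℤ → Set ℝ := fun i => if i ∈ S then Set.Icc 0 a else Set.Icc 0 b
  have hC (i : ℤ) : MeasurableSet (C i) := by
    dsimp only [C]
    split_ifs <;> exact measurableSet_Icc
  have hset : cylIcc a S ∩ cylIcc b T = {x | ∀ i ∈ S ∪ (T \ S), x i ∈ C i} := by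
    ext x
    simp only [cylIcc, C, Set.mem_inter_iff, Set.mem_ofPred_eq, Finset.mem_union,
      Finset.mem_sdiff]
    constructor
    · rintro ⟨hS, hT⟩ i (hi | ⟨hi, hiS⟩)
      · simpa [hi] using hS i hi
      · simpa [hiS] using hT i hi
    · intro h
      refine ⟨fun i hi => by simpa [hi] using h i (.inl hi), fun i hi => ?_⟩
      by_cases hiS : i ∈ S
      · exact Set.Icc_subset_Icc le_rfl hab (by simpa [hiS] using h i (.inl hiS))
      · simpa [hiS] using h i (.inr ⟨hi, hiS⟩)
  rw [hset, hπ _ C hC, Finset.prod_union Finset.disjoint_sdiff,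
    Finset.prod_eq_pow_card (b := ENNReal.ofReal a) fun i hi => by
      simp only [C, if_pos hi, μ01_Icc (hab.trans hb)],
    Finset.prod_eq_pow_card (b := ENNReal.ofReal b) fun i hi => by
      simp only [C, if_neg (Finset.mem_sdiff.mp hi).2, μ01_Icc hb]]

theorem trim_restrict_cylIcc {π : Measure (ℤ → ℝ)} [IsFiniteMeasure π]
    (hπ : IsProductMeasure π μ01) {a b : ℝ} (ha : 0 ≤ a) (hab : a ≤ b) (hb : b ≤ 1)
    (hB : coordAlg b ≤ (inferInstance : MeasurableSpace (ℤ → ℝ))) (S : Finset ℤ) :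
    (π.restrict (cylIcc a S)).trim hB =
      ENNReal.ofReal (a / b) ^ S.card • (π.restrict (cylIcc b S)).trim hB := by
  have h_ratio : ENNReal.ofReal a = ENNReal.ofReal (a / b) * ENNReal.ofReal b := by
    rcases (ha.trans hab).eq_or_lt with rfl | hb0
    · simp [show a = 0 by linarith]
    · rw [← ENNReal.ofReal_mul (div_nonneg ha hb0.le), div_mul_cancel₀ a hb0.ne']
  have h_cyl (T : Finset ℤ) :
      (π.restrict (cylIcc a S)).trim hB (cylIcc b T) =
        (ENNReal.ofReal (a / b) ^ S.card • (π.restrict (cylIcc b S)).trim hB) (cylIcc b T) := by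
    have hT := measurableSet_cylIcc b T
    rw [Measure.smul_apply, trim_measurableSet_eq hB hT, trim_measurableSet_eq hB hT,
      Measure.restrict_apply (hB _ hT), Measure.restrict_apply (hB _ hT), Set.inter_comm,
      measure_cylIcc_inter_cylIcc hπ hab hb, Set.inter_comm,
      measure_cylIcc_inter_cylIcc hπ le_rfl hb, h_ratio, mul_pow, smul_eq_mul]
    ring
  refine ext_of_generate_finite _ (coordAlg_eq_generateFrom_cylIcc b)
    (isPiSystem_range_cylIcc b) ?_ ?_
  · rintro _ ⟨T, rfl⟩
    exact h_cyl T
  · rw [← cylIcc_empty b]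
    exact h_cyl ∅

theorem setIntegral_cylIcc {π : Measure (ℤ → ℝ)} [IsFiniteMeasure π]
    (hπ : IsProductMeasure π μ01) {a b : ℝ} (ha : 0 ≤ a) (hab : a ≤ b) (hb : b ≤ 1)
    (hB : coordAlg b ≤ (inferInstance : MeasurableSpace (ℤ → ℝ))) {g : (ℤ → ℝ) → ℝ}
    (hg : StronglyMeasurable[coordAlg b] g) (S : Finset ℤ) :
    ∫ x in cylIcc a S, g x ∂π = (a / b) ^ S.card * ∫ x in cylIcc b S, g x ∂π := by
  rw [integral_trim hB hg, trim_restrict_cylIcc hπ ha hab hb hB, integral_smul_measure,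
    ← integral_trim hB hg, ENNReal.toReal_pow,
    ENNReal.toReal_ofReal (div_nonneg ha (ha.trans hab)), smul_eq_mul]

theorem shift_condexp_denseRange_general (a : ℝ) (ha0 : 0 < a) (ha1 : a < 1 / 2)
    (π : Measure (ℤ → ℝ)) [IsProbabilityMeasure π] (hπ : IsProductMeasure π μ01)
    [hA : Fact (coordAlg a ≤ (inferInstance : MeasurableSpace (ℤ → ℝ)))]
    [hB : Fact (coordAlg (1 / 2) ≤ (inferInstance : MeasurableSpace (ℤ → ℝ)))] :
    DenseRange (condexpW (coordAlg a) (coordAlg (1 / 2)) π hB.out) := by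
  refine denseRange_condexpW_of hA.out hB.out fun g hg hg_int hg_zero => ?_
  refine hg.ae_eq_zero_of_forall_setIntegral_isPiSystem hB.out
    (coordAlg_eq_generateFrom_cylIcc _) (isPiSystem_range_cylIcc _) ⟨∅, cylIcc_empty _⟩
    hg_int ?_
  rintro _ ⟨S, rfl⟩
  have h := hg_zero _ (measurableSet_cylIcc a S)
  rw [setIntegral_cylIcc hπ ha0.le ha1.le (by norm_num) hB.out hg S] at h
  exact (mul_eq_zero.mp h).resolve_left (by positivity)

/-- Fix `0 < a < 1/2` and let `π = μ^⊗ℤ` be the product of Lebesgue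
measure on `[0,1]`, preserved by the shift `S`. With `𝒜 = coordAlg a` and
`ℬ = coordAlg (1/2)` the sub-σ-algebras generated by the coordinate sets
`{x : x n ∈ [0,a]}` resp. `{x : x n ∈ [0,1/2]}`, the image of `L²(𝒜)` under the
conditional expectation `E[·|ℬ]` is dense in `L²(ℬ)`. -/
theorem shift_condexp_denseRange (a : ℝ) (ha0 : 0 < a) (ha1 : a < 1 / 2)
    (π : Measure (ℤ → ℝ)) [IsProbabilityMeasure π] (hπ : IsProductMeasure π μ01)
    (hS : MeasurePreserving (shiftZ (α := ℝ)) π π)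
    (hSinv : MeasurePreserving (shiftZinv (α := ℝ)) π π)
    [hA : Fact (coordAlg a ≤ (inferInstance : MeasurableSpace (ℤ → ℝ)))]
    [hB : Fact (coordAlg (1 / 2) ≤ (inferInstance : MeasurableSpace (ℤ → ℝ)))] :
    DenseRange (condexpW (coordAlg a) (coordAlg (1 / 2)) π hB.out) :=
  shift_condexp_denseRange_general a ha0 ha1 π hπ (hA := hA) (hB := hB)
end
end
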